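/- arXiv:1711.08719 — 2 statements merged into one kernel-verified Lean document; each statement's English description precedes it below -/
import Mathlib

section
/- For t ∈ (0, π/2] set x = cos²t ∈ [0,1). Then sin²t · Σ_{m=0}^∞ a_m cos^{2m}t = (1-x)·Σ_{m=0}^∞ a_m x^m where a_m = Γ(m+1/2)Γ(m+3/2)/(m!)², and this quantity is at most a_0 = π/2, with equality at t = π/2. -/
open Real

noncomputable def aSeq (m : ℕ) : ℝ :=
  Real.Gamma (m + 1/2) * Real.Gamma (m + 3/2) / (Nat.factorial m : ℝ)^2

lemma aSeq_pos (m : ℕ) : 0 < aSeq m := by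
  unfold aSeq
  apply div_pos
  · exact mul_pos (Real.Gamma_pos_of_pos (by positivity)) (Real.Gamma_pos_of_pos (by positivity))
  · exact pow_pos (by exact_mod_cast m.factorial_pos) 2

lemma aSeq_zero : aSeq 0 = π / 2 := by
  unfold aSeq
  have h : (3:ℝ)/2 = 1/2 + 1 := by norm_num
  simp only [Nat.cast_zero, zero_add, Nat.factorial_zero, Nat.cast_one]
  rw [h, Real.Gamma_add_one (by norm_num), Real.Gamma_one_half_eq]
  rw [show √π * (1/2 * √π) = 1/2 * (√π * √π) by ring,
    Real.mul_self_sqrt Real.pi_pos.le]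
  ring

lemma aSeq_succ_le (m : ℕ) : aSeq (m + 1) ≤ aSeq m := by
  have e1 : Real.Gamma (((m+1 : ℕ) : ℝ) + 1/2) = ((m:ℝ) + 1/2) * Real.Gamma ((m:ℝ) + 1/2) := by
    push_cast
    rw [show (m:ℝ) + 1 + 1/2 = ((m:ℝ) + 1/2) + 1 by ring, Real.Gamma_add_one (by positivity)]
  have e2 : Real.Gamma (((m+1 : ℕ) : ℝ) + 3/2) = ((m:ℝ) + 3/2) * Real.Gamma ((m:ℝ) + 3/2) := by
    push_cast
    rw [show (m:ℝ) + 1 + 3/2 = ((m:ℝ) + 3/2) + 1 by ring, Real.Gamma_add_one (by positivity)]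
  have ef : ((Nat.factorial (m+1) : ℝ)) = ((m:ℝ)+1) * (Nat.factorial m : ℝ) := by
    rw [Nat.factorial_succ]; push_cast; ring
  have key : aSeq (m+1) = (((m:ℝ)+1/2) * ((m:ℝ)+3/2) / ((m:ℝ)+1)^2) * aSeq m := by
    unfold aSeq
    rw [e1, e2, ef]
    field_simp
  rw [key]
  have hfac : ((m:ℝ)+1/2) * ((m:ℝ)+3/2) / ((m:ℝ)+1)^2 ≤ 1 := by
    rw [div_le_one (by positivity)]
    nlinarith [sq_nonneg ((m:ℝ)+1)]
  calc (((m:ℝ)+1/2) * ((m:ℝ)+3/2) / ((m:ℝ)+1)^2) * aSeq m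
      ≤ 1 * aSeq m := mul_le_mul_of_nonneg_right hfac (aSeq_pos m).le
    _ = aSeq m := one_mul _

lemma aSeq_le_zero (m : ℕ) : aSeq m ≤ aSeq 0 := by
  induction m with
  | zero => exact le_refl _
  | succ n ih => exact le_trans (aSeq_succ_le n) ih

lemma main_bound {x : ℝ} (hx0 : 0 ≤ x) (hx1 : x < 1) :
    (1 - x) * ∑' m : ℕ, aSeq m * x ^ m ≤ aSeq 0 := by
  have hsg : Summable (fun m : ℕ => aSeq 0 * x ^ m) :=
    (summable_geometric_of_lt_one hx0 hx1).mul_left _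
  have hs : Summable (fun m : ℕ => aSeq m * x ^ m) := by
    apply Summable.of_nonneg_of_le (fun m => mul_nonneg (aSeq_pos m).le (pow_nonneg hx0 m))
      (fun m => mul_le_mul_of_nonneg_right (aSeq_le_zero m) (pow_nonneg hx0 m)) hsg
  have hle : (∑' m : ℕ, aSeq m * x ^ m) ≤ aSeq 0 * (1 - x)⁻¹ := by
    calc (∑' m : ℕ, aSeq m * x ^ m) ≤ ∑' m : ℕ, aSeq 0 * x ^ m :=
          Summable.tsum_le_tsum (fun m => mul_le_mul_of_nonneg_right (aSeq_le_zero m) (pow_nonneg hx0 m)) hs hsg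
      _ = aSeq 0 * (1 - x)⁻¹ := by
          rw [tsum_mul_left, tsum_geometric_of_lt_one hx0 hx1]
  calc (1 - x) * ∑' m : ℕ, aSeq m * x ^ m
      ≤ (1 - x) * (aSeq 0 * (1 - x)⁻¹) :=
        mul_le_mul_of_nonneg_left hle (by linarith)
    _ = aSeq 0 := by
        rw [mul_comm (1-x), mul_assoc, inv_mul_cancel₀ (by linarith : (1:ℝ)-x ≠ 0), mul_one]

theorem sin_sq_series_bound (t : ℝ) (ht0 : 0 < t) (ht : t ≤ π/2) :
    ((Real.sin t)^2 * ∑' m : ℕ, aSeq m * Real.cos t ^ (2*m)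
        = (1 - (Real.cos t)^2) * ∑' m : ℕ, aSeq m * ((Real.cos t)^2) ^ m) ∧
    ((Real.sin t)^2 * ∑' m : ℕ, aSeq m * Real.cos t ^ (2*m) ≤ aSeq 0) ∧
    aSeq 0 = π/2 ∧
    (Real.sin (π/2))^2 * ∑' m : ℕ, aSeq m * Real.cos (π/2) ^ (2*m) = π/2 := by
  have hser : (∑' m : ℕ, aSeq m * Real.cos t ^ (2*m))
      = ∑' m : ℕ, aSeq m * ((Real.cos t)^2) ^ m := by
    apply tsum_congr
    intro m
    rw [pow_mul]
  have heq : (Real.sin t)^2 * ∑' m : ℕ, aSeq m * Real.cos t ^ (2*m)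
      = (1 - (Real.cos t)^2) * ∑' m : ℕ, aSeq m * ((Real.cos t)^2) ^ m := by
    rw [hser, Real.sin_sq]
  have hc0 : 0 ≤ Real.cos t := Real.cos_nonneg_of_mem_Icc ⟨by linarith [Real.pi_pos], ht⟩
  have hc1 : Real.cos t < 1 := by
    have := Real.cos_lt_cos_of_nonneg_of_le_pi (le_refl 0)
      (by linarith [Real.pi_pos]) ht0
    simpa using this
  have hx0 : (0:ℝ) ≤ (Real.cos t)^2 := by positivity
  have hx1 : (Real.cos t)^2 < 1 := by nlinarith
  refine ⟨heq, ?_, aSeq_zero, ?_⟩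
  · rw [heq]; exact main_bound hx0 hx1
  · rw [Real.sin_pi_div_two, Real.cos_pi_div_two]
    have : (∑' m : ℕ, aSeq m * (0:ℝ) ^ (2*m)) = aSeq 0 := by
      rw [tsum_eq_single 0]
      · simp
      · intro m hm
        rw [zero_pow (by omega), mul_zero]
    rw [this, aSeq_zero]; ring
end

section
/- For s = (n+α+1)/2 with n+α > 1, the double series Σ_{k,m≥0} [(s)_k/k!]²·[(s+1/2)_m/m!]²·B(k+1, n+α-1)·B(m+3/2, k+n+α)·x^m, for 0 ≤ x < 1, equals [Γ(n+α-1)/Γ((n+α)/2+1)²]·Σ_{m=0}^∞ Γ(m+1/2)Γ(m+3/2)/(m!)²·x^m. -/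
/-!
With `c = n + α` the two Beta factors multiply to `k! Γ(c-1) Γ(m+3/2) / Γ(c+m+3/2+k)`, so for
fixed `m` the sum over `k` is a Gauss series `₂F₁(s, s; c+m+3/2; 1)` with `s = (c+1)/2`, and Gauss's
summation theorem turns it into `Γ(m+1/2) / Γ(c/2+1+m)²`; the factor `(s+1/2)_m²` cancels the
square. Gauss's theorem for positive parameters comes from Euler's integral: expand `(1-t)^(-a)`
by the binomial series inside a Beta integral and integrate term by term. All terms are
nonnegative, so the double series may be summed over `k` first.
-/

open Real

/-- Pochhammer symbol `(a)_k = a(a+1)⋯(a+k-1)` for real `a`. -/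
noncomputable def poch (a : ℝ) (k : ℕ) : ℝ := (ascPochhammer ℝ k).eval a

/-- Beta function `B(x,y) = Γ(x)Γ(y)/Γ(x+y)`. -/
noncomputable def betaFun (x y : ℝ) : ℝ :=
  Real.Gamma x * Real.Gamma y / Real.Gamma (x + y)

open MeasureTheory Set Nat

lemma poch_pos {a : ℝ} (ha : 0 < a) (k : ℕ) : 0 < poch a k := ascPochhammer_pos k a ha

lemma Gamma_add_nat {a : ℝ} (ha : 0 < a) (k : ℕ) : Gamma (a + k) = Gamma a * poch a k := by
  induction k with
  | zero => simp [poch]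
  | succ k ih =>
    rw [cast_succ, ← add_assoc, Gamma_add_one (by positivity), ih, poch, poch,
      ascPochhammer_succ_eval]
    ring

lemma choose_add_sub_one_eq_poch_div (a : ℝ) (k : ℕ) :
    Ring.choose (a + k - 1) k = poch a k / k ! := by
  rw [Ring.choose_eq_smul, Polynomial.descPochhammer_smeval_eq_ascPochhammer,
    show a + k - 1 - k + 1 = a by ring, Polynomial.ascPochhammer_smeval_eq_eval, poch,
    smul_eq_mul, inv_mul_eq_div]

lemma hasSum_poch_div_factorial_mul_pow (a : ℝ) {t : ℝ} (ht₀ : 0 ≤ t) (ht₁ : t < 1) :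
    HasSum (fun k : ℕ => poch a k / k ! * t ^ k) ((1 - t) ^ (-a)) := by
  have := (one_div_one_sub_rpow_hasFPowerSeriesOnBall_zero a).hasSum
    (y := t) (by simpa [edist_dist, abs_of_nonneg ht₀] using ht₁)
  simp only [FormalMultilinearSeries.ofScalars_apply_eq, zero_add, one_div, smul_eq_mul] at this
  rw [rpow_neg (by linarith)]
  simpa [choose_add_sub_one_eq_poch_div, mul_comm] using this

lemma betaFun_mul_betaFun_add {p q r : ℝ} (h : Gamma (p + q) ≠ 0) :
    betaFun p q * betaFun r (p + q) = Gamma p * Gamma q * Gamma r / Gamma (p + q + r) := by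
  rw [betaFun, betaFun, add_comm r]
  field_simp

lemma betaFun_pos {p q : ℝ} (hp : 0 < p) (hq : 0 < q) : 0 < betaFun p q :=
  div_pos (mul_pos (Gamma_pos_of_pos hp) (Gamma_pos_of_pos hq)) (Gamma_pos_of_pos (add_pos hp hq))

lemma ofReal_cpow_mul_one_sub_cpow {t : ℝ} (ht : t ∈ Ioo (0 : ℝ) 1) (a b : ℝ) :
    (t : ℂ) ^ ((a : ℂ) - 1) * (1 - (t : ℂ)) ^ ((b : ℂ) - 1) =
      ((t ^ (a - 1) * (1 - t) ^ (b - 1) : ℝ) : ℂ) := by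
  push_cast
  rw [Complex.ofReal_cpow ht.1.le, Complex.ofReal_cpow (by linarith [ht.2])]
  push_cast
  ring

lemma integrableOn_rpow_mul_one_sub_rpow {a b : ℝ} (ha : 0 < a) (hb : 0 < b) :
    IntegrableOn (fun t : ℝ => t ^ (a - 1) * (1 - t) ^ (b - 1)) (Ioo 0 1) := by
  have hC := (intervalIntegrable_iff_integrableOn_Ioc_of_le zero_le_one).mp
    (Complex.betaIntegral_convergent (u := a) (v := b) (by simpa) (by simpa))
  refine IntegrableOn.congr_fun (hC.mono_set Ioo_subset_Ioc_self).re (fun t ht => ?_)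
    measurableSet_Ioo
  simp [ofReal_cpow_mul_one_sub_cpow ht]

lemma integral_rpow_mul_one_sub_rpow {a b : ℝ} (ha : 0 < a) (hb : 0 < b) :
    ∫ t in Ioo (0 : ℝ) 1, t ^ (a - 1) * (1 - t) ^ (b - 1) = betaFun a b := by
  have h := Complex.betaIntegral_eq_Gamma_mul_div a b (by simpa) (by simpa)
  rw [Complex.betaIntegral, intervalIntegral.integral_of_le zero_le_one,
    integral_Ioc_eq_integral_Ioo, setIntegral_congr_fun measurableSet_Ioo
      (fun t ht => ofReal_cpow_mul_one_sub_cpow ht a b), integral_complex_ofReal] at h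
  rw [← Complex.ofReal_add, Complex.Gamma_ofReal, Complex.Gamma_ofReal,
    Complex.Gamma_ofReal] at h
  exact_mod_cast h

lemma hasSum_integral_of_nonneg {α : Type*} [MeasurableSpace α] {μ : Measure α}
    {f : ℕ → α → ℝ} {F : α → ℝ} (hf : ∀ k, Integrable (f k) μ) (hf₀ : ∀ k, 0 ≤ᵐ[μ] f k)
    (hF : Integrable F μ) (hfF : ∀ᵐ t ∂μ, HasSum (fun k => f k t) (F t)) :
    HasSum (fun k => ∫ t, f k t ∂μ) (∫ t, F t ∂μ) := by
  rw [hasSum_iff_tendsto_nat_of_nonneg fun k => integral_nonneg_of_ae (hf₀ k)]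
  have hbound : ∀ N, ∀ᵐ t ∂μ, ‖∑ k ∈ Finset.range N, f k t‖ ≤ F t := fun N => by
    filter_upwards [hfF, ae_all_iff.2 hf₀] with t ht ht₀
    rw [Real.norm_of_nonneg (Finset.sum_nonneg fun k _ => ht₀ k)]
    exact sum_le_hasSum _ (fun k _ => ht₀ k) ht
  have := tendsto_integral_of_dominated_convergence F
    (fun N => (integrable_finsetSum (Finset.range N) fun k _ => hf k).aestronglyMeasurable)
    hF hbound (by filter_upwards [hfF] with t ht using ht.tendsto_sum_nat)
  simpa [integral_finsetSum _ fun k _ => hf k] using this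

lemma tsum_prod_eq_tsum_of_hasSum_of_nonneg {α β : Type*} {f : α → β → ℝ} {g : β → ℝ}
    (hf : ∀ a b, 0 ≤ f a b) (hg : ∀ b, HasSum (fun a => f a b) (g b)) :
    ∑' p : α × β, f p.1 p.2 = ∑' b, g b := by
  rw [← (Equiv.prodComm β α).tsum_eq]
  by_cases hsum : Summable g
  · have hprod : Summable fun q : β × α => f q.2 q.1 :=
      (summable_prod_of_nonneg fun q => hf q.2 q.1).2
        ⟨fun b => (hg b).summable, hsum.congr fun b => (hg b).tsum_eq.symm⟩
    simp only [Equiv.prodComm_apply, Prod.fst_swap, Prod.snd_swap]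
    rw [hprod.tsum_prod' fun b => (hg b).summable]
    exact tsum_congr fun b => (hg b).tsum_eq
  · have hprod : ¬ Summable fun q : β × α => f q.2 q.1 := fun h =>
      hsum (((summable_prod_of_nonneg fun q => hf q.2 q.1).1 h).2.congr fun b => (hg b).tsum_eq)
    simp only [Equiv.prodComm_apply, Prod.fst_swap, Prod.snd_swap]
    rw [tsum_eq_zero_of_not_summable hprod, tsum_eq_zero_of_not_summable hsum]

-- Euler's integral: integrate the binomial series of `(1-t)^(-a)` against `t^(b-1) (1-t)^(c-b-1)`.
lemma hasSum_poch_div_factorial_mul_betaFun {a b c : ℝ} (ha : 0 < a) (hb : 0 < b)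
    (hc : a + b < c) :
    HasSum (fun k : ℕ => poch a k / k ! * betaFun (b + k) (c - b)) (betaFun b (c - a - b)) := by
  let μ := volume.restrict (Ioo (0 : ℝ) 1)
  have hcb : 0 < c - b := by linarith
  have hf : ∀ k : ℕ, Integrable (fun t => poch a k / k ! *
      (t ^ (b + k - 1) * (1 - t) ^ (c - b - 1))) μ := fun k =>
    (integrableOn_rpow_mul_one_sub_rpow (by positivity) hcb).const_mul _
  have hf₀ : ∀ k : ℕ, 0 ≤ᵐ[μ] fun t => poch a k / k ! *
      (t ^ (b + k - 1) * (1 - t) ^ (c - b - 1)) := fun k => by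
    filter_upwards [ae_restrict_mem measurableSet_Ioo] with t ht
    have := poch_pos ha k
    have : 0 < 1 - t := by linarith [ht.2]
    have := ht.1
    positivity
  have hfF : ∀ᵐ t ∂μ, HasSum (fun k : ℕ => poch a k / k ! *
      (t ^ (b + k - 1) * (1 - t) ^ (c - b - 1))) (t ^ (b - 1) * (1 - t) ^ (c - a - b - 1)) := by
    filter_upwards [ae_restrict_mem measurableSet_Ioo] with t ht
    have h1t : 0 < 1 - t := by linarith [ht.2]
    have h := (hasSum_poch_div_factorial_mul_pow a ht.1.le ht.2).mul_left
      (t ^ (b - 1) * (1 - t) ^ (c - b - 1))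
    rw [mul_assoc, ← rpow_add h1t, show c - b - 1 + -a = c - a - b - 1 by ring] at h
    refine h.congr_fun fun k => ?_
    rw [show b + k - 1 = b - 1 + k by ring, rpow_add ht.1, rpow_natCast]
    ring
  have h := hasSum_integral_of_nonneg hf hf₀
    (integrableOn_rpow_mul_one_sub_rpow hb (by linarith)) hfF
  simp only [integral_const_mul] at h
  rw [integral_rpow_mul_one_sub_rpow hb (by linarith)] at h
  exact h.congr_fun fun k => by
    rw [← integral_rpow_mul_one_sub_rpow (by positivity) hcb]

-- Gauss's summation `₂F₁(a, b; c; 1) = Γ(c) Γ(c-a-b) / (Γ(c-a) Γ(c-b))`, divided by `Γ(c)`.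
theorem hasSum_poch_mul_poch_div_factorial_mul_Gamma {a b c : ℝ} (ha : 0 < a) (hb : 0 < b)
    (hc : a + b < c) :
    HasSum (fun k : ℕ => poch a k * poch b k / (k ! * Gamma (c + k)))
      (Gamma (c - a - b) / (Gamma (c - a) * Gamma (c - b))) := by
  have hΓb := (Gamma_pos_of_pos hb).ne'
  have hΓcb := (Gamma_pos_of_pos (by linarith : 0 < c - b)).ne'
  have h := (hasSum_poch_div_factorial_mul_betaFun ha hb hc).div_const (Gamma b * Gamma (c - b))
  rw [betaFun, show b + (c - a - b) = c - a by ring,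
    show Gamma b * Gamma (c - a - b) / Gamma (c - a) / (Gamma b * Gamma (c - b)) =
      Gamma (c - a - b) / (Gamma (c - a) * Gamma (c - b)) by field_simp] at h
  refine h.congr_fun fun k => ?_
  rw [betaFun, Gamma_add_nat hb, show b + k + (c - b) = c + k by ring]
  field_simp

lemma poch_eq_Gamma_div {a : ℝ} (ha : 0 < a) (k : ℕ) : poch a k = Gamma (a + k) / Gamma a := by
  rw [Gamma_add_nat ha, mul_div_cancel_left₀ _ (Gamma_pos_of_pos ha).ne']

lemma hasSum_double_series_fiber {c : ℝ} (hc : 1 < c) (x : ℝ) (m : ℕ) :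
    HasSum (fun k : ℕ => (poch ((c + 1) / 2) k / k !) ^ 2 *
        (poch ((c + 1) / 2 + 1 / 2) m / m !) ^ 2 *
        betaFun (k + 1) (c - 1) * betaFun (m + 3 / 2) (k + c) * x ^ m)
      (Gamma (c - 1) / Gamma (c / 2 + 1) ^ 2 *
        (Gamma (m + 1 / 2) * Gamma (m + 3 / 2) / (m ! : ℝ) ^ 2 * x ^ m)) := by
  set s := (c + 1) / 2
  have hs : 0 < s := by positivity
  have hgauss := hasSum_poch_mul_poch_div_factorial_mul_Gamma (c := 2 * s + (m + 1 / 2)) hs hs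
    (by linarith [(m.cast_nonneg : (0 : ℝ) ≤ m)])
  rw [show 2 * s + (m + 1 / 2) - s - s = m + 1 / 2 by ring,
    show 2 * s + (m + 1 / 2) - s = c / 2 + 1 + m by ring] at hgauss
  have hpoch : poch (s + 1 / 2) m = Gamma (c / 2 + 1 + m) / Gamma (c / 2 + 1) := by
    rw [show s + 1 / 2 = c / 2 + 1 by ring, poch_eq_Gamma_div (by linarith)]
  have hΓ := (Gamma_pos_of_pos (by positivity : 0 < c / 2 + 1)).ne'
  have hΓm := (Gamma_pos_of_pos (by positivity : 0 < c / 2 + 1 + m)).ne'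
  have hvalue : Gamma (c - 1) * Gamma (m + 3 / 2) * (poch (s + 1 / 2) m / m !) ^ 2 * x ^ m *
      (Gamma (m + 1 / 2) / (Gamma (c / 2 + 1 + m) * Gamma (c / 2 + 1 + m))) =
      Gamma (c - 1) / Gamma (c / 2 + 1) ^ 2 *
        (Gamma (m + 1 / 2) * Gamma (m + 3 / 2) / (m ! : ℝ) ^ 2 * x ^ m) := by
    rw [hpoch]
    field_simp
  refine hvalue ▸ (hgauss.mul_left (Gamma (c - 1) * Gamma (m + 3 / 2) *
    (poch (s + 1 / 2) m / m !) ^ 2 * x ^ m)).congr_fun fun k => ?_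
  rw [show (k : ℝ) + c = (k + 1) + (c - 1) by ring, mul_assoc (_ * _) (betaFun _ _) (betaFun _ _),
    betaFun_mul_betaFun_add (Gamma_pos_of_pos (by linarith : (0 : ℝ) < k + 1 + (c - 1))).ne',
    Gamma_nat_eq_factorial,
    show (k + 1 : ℝ) + (c - 1) + (m + 3 / 2) = 2 * s + (m + 1 / 2) + k by ring]
  have := (Gamma_pos_of_pos (by positivity : 0 < 2 * s + (m + 1 / 2) + k)).ne'
  field_simp

theorem double_series_eval_general (n α : ℝ) (h : n + α > 1) (x : ℝ) (hx0 : 0 ≤ x) :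
    ∑' p : ℕ × ℕ,
        (poch ((n+α+1)/2) p.1 / (Nat.factorial p.1 : ℝ))^2 *
        (poch ((n+α+1)/2 + 1/2) p.2 / (Nat.factorial p.2 : ℝ))^2 *
        betaFun (p.1 + 1) (n + α - 1) * betaFun (p.2 + 3/2) (p.1 + n + α) * x ^ p.2
      = Real.Gamma (n + α - 1) / (Real.Gamma ((n+α)/2 + 1))^2 *
          ∑' m : ℕ, Real.Gamma (m + 1/2) * Real.Gamma (m + 3/2) / (Nat.factorial m : ℝ)^2 * x ^ m := by
  have hfiber := hasSum_double_series_fiber h x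
  simp only [← add_assoc] at hfiber
  refine (tsum_prod_eq_tsum_of_hasSum_of_nonneg (fun k m => ?_) hfiber).trans tsum_mul_left
  have := betaFun_pos (p := k + 1) (q := n + α - 1) (by positivity) (by linarith)
  have := betaFun_pos (p := m + 3 / 2) (q := k + n + α) (by positivity)
    (by linarith [(k.cast_nonneg : (0 : ℝ) ≤ k)])
  positivity

theorem double_series_eval (n α : ℝ) (h : n + α > 1) (x : ℝ) (hx0 : 0 ≤ x) (hx1 : x < 1) :
    ∑' p : ℕ × ℕ,
        (poch ((n+α+1)/2) p.1 / (Nat.factorial p.1 : ℝ))^2 *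
        (poch ((n+α+1)/2 + 1/2) p.2 / (Nat.factorial p.2 : ℝ))^2 *
        betaFun (p.1 + 1) (n + α - 1) * betaFun (p.2 + 3/2) (p.1 + n + α) * x ^ p.2
      = Real.Gamma (n + α - 1) / (Real.Gamma ((n+α)/2 + 1))^2 *
          ∑' m : ℕ, Real.Gamma (m + 1/2) * Real.Gamma (m + 3/2) / (Nat.factorial m : ℝ)^2 * x ^ m :=
  double_series_eval_general n α h x hx0
end
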